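/- arXiv:2404.03041 — 2 statements merged into one kernel-verified Lean document; each statement's English description precedes it below -/
import Mathlib

section
/- Let (X,x₀) and (Y,y₀) be pointed topological spaces, let W = X ∨ Y be their wedge (the quotient of X ⊔ Y identifying x₀ with y₀) with canonical maps j_X : X → W, j_Y : Y → W, and let r_X : W → X and r_Y : W → Y be the retractions collapsing the other wedge summand to the basepoint. Let P₀(X×Y) ⊆ C([0,1], X×Y) be the subspace of paths ending at (x₀,y₀), and let Q ⊆ C([0,1], W) be the subspace of paths starting in j_X(X) and ending in j_Y(Y). Then: (a) the map h : P₀(X×Y) → Q sending φ = (φ_X, φ_Y) to the concatenation of j_X∘φ_X followed by the reverse of j_Y∘φ_Y is well defined and continuous, and h(φ) is a path from j_X(φ_X(0)) to j_Y(φ_Y(0)); (b) the map r : Q → P₀(X×Y) defined by r(ψ) = (r_X∘ψ, reverse of r_Y∘ψ) is well defined and continuous; (c) for every φ ∈ P₀(X×Y), (r∘h)(φ) = φ∘α where α(t) = min(2t,1); in particular r∘h is homotopic to the identity of P₀(X×Y) through maps preserving the initial point of each path. -/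
open unitInterval

noncomputable section

variable {X Y : Type*} [TopologicalSpace X] [TopologicalSpace Y]

/-- The wedge `X ∨ Y`: the quotient of `X ⊔ Y` identifying `x₀` with `y₀`. -/
abbrev Wedge (x₀ : X) (y₀ : Y) : Type _ :=
  Quot (fun a b : X ⊕ Y => a = Sum.inl x₀ ∧ b = Sum.inr y₀)

/-- The canonical map `X → X ∨ Y`. -/
def wedgeInl (x₀ : X) (y₀ : Y) (x : X) : Wedge x₀ y₀ := Quot.mk _ (Sum.inl x)

/-- The canonical map `Y → X ∨ Y`. -/
def wedgeInr (x₀ : X) (y₀ : Y) (y : Y) : Wedge x₀ y₀ := Quot.mk _ (Sum.inr y)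

/-- The retraction `X ∨ Y → X` collapsing `Y` to the basepoint. -/
def wedgeRetrX (x₀ : X) (y₀ : Y) : Wedge x₀ y₀ → X :=
  Quot.lift (Sum.elim id fun _ => x₀) (by rintro a b ⟨rfl, rfl⟩; rfl)

/-- The retraction `X ∨ Y → Y` collapsing `X` to the basepoint. -/
def wedgeRetrY (x₀ : X) (y₀ : Y) : Wedge x₀ y₀ → Y :=
  Quot.lift (Sum.elim (fun _ => y₀) id) (by rintro a b ⟨rfl, rfl⟩; rfl)


set_option linter.unusedSectionVars false

namespace WedgeAux

variable (x₀ : X) (y₀ : Y)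

local notation "S" => {φ : C(unitInterval, X × Y) // φ 1 = (x₀, y₀)}
local notation "Q" => {ψ : C(unitInterval, Wedge x₀ y₀) //
    (∃ x, ψ 0 = wedgeInl x₀ y₀ x) ∧ ∃ y, ψ 1 = wedgeInr x₀ y₀ y}

/-- clamp to `[0,1]`. -/
def pr : ℝ → unitInterval := Set.projIcc 0 1 zero_le_one

lemma continuous_pr : Continuous pr := continuous_projIcc

lemma pr_mem {x : ℝ} (h0 : 0 ≤ x) (h1 : x ≤ 1) : pr x = ⟨x, h0, h1⟩ :=
  Set.projIcc_of_mem _ ⟨h0, h1⟩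

lemma continuous_wedgeInl : Continuous (wedgeInl x₀ y₀) :=
  continuous_quot_mk.comp continuous_inl

lemma continuous_wedgeInr : Continuous (wedgeInr x₀ y₀) :=
  continuous_quot_mk.comp continuous_inr

lemma continuous_wedgeRetrX : Continuous (wedgeRetrX x₀ y₀) :=
  continuous_quot_lift _ (continuous_id.sumElim continuous_const)

lemma continuous_wedgeRetrY : Continuous (wedgeRetrY x₀ y₀) :=
  continuous_quot_lift _ (continuous_const.sumElim continuous_id)

lemma wedge_basepoint : wedgeInl x₀ y₀ x₀ = wedgeInr x₀ y₀ y₀ :=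
  Quot.sound ⟨rfl, rfl⟩

/-- The underlying map of `h`, uncurried. -/
def hMap : S × unitInterval → Wedge x₀ y₀ := fun p =>
  if 2 * (p.2 : ℝ) ≤ 1 then wedgeInl x₀ y₀ (p.1.1 (pr (2 * p.2))).1
  else wedgeInr x₀ y₀ (p.1.1 (pr (2 - 2 * p.2))).2

lemma continuous_hMap : Continuous (hMap x₀ y₀) := by
  have hc : Continuous fun p : S × unitInterval => (2 * (p.2 : ℝ)) :=
    continuous_const.mul (continuous_subtype_val.comp continuous_snd)
  apply Continuous.if_le
  · exact (continuous_wedgeInl x₀ y₀).comp <| continuous_fst.comp <|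
      continuous_eval.comp <|
        (continuous_subtype_val.comp continuous_fst).prodMk ((continuous_pr).comp hc)
  · exact (continuous_wedgeInr x₀ y₀).comp <| continuous_snd.comp <|
      continuous_eval.comp <|
        (continuous_subtype_val.comp continuous_fst).prodMk
          ((continuous_pr).comp (continuous_const.sub hc))
  · exact hc
  · exact continuous_const
  · rintro ⟨φ, t⟩ h
    simp only [h]
    have h1 : pr (1 : ℝ) = 1 := pr_mem zero_le_one le_rfl
    rw [show (2 : ℝ) - 1 = 1 by ring, h1, φ.2]
    exact wedge_basepoint x₀ y₀

/-- The curried `h`, landing in `C(unitInterval, Wedge)`. -/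
def hCM : C(S, C(unitInterval, Wedge x₀ y₀)) :=
  ContinuousMap.curry ⟨hMap x₀ y₀, continuous_hMap x₀ y₀⟩

lemma hCM_apply (φ : S) (t : unitInterval) : hCM x₀ y₀ φ t = hMap x₀ y₀ (φ, t) := rfl

lemma hCM_left (φ : S) (t : unitInterval) (ht : 2 * (t : ℝ) ≤ 1) :
    hCM x₀ y₀ φ t = wedgeInl x₀ y₀
      ((φ.1 (⟨2 * (t : ℝ), mul_nonneg (by norm_num) t.2.1, ht⟩ : unitInterval)).1) := by
  rw [hCM_apply, hMap, if_pos ht, pr_mem (mul_nonneg (by norm_num) t.2.1) ht]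

lemma hCM_right (φ : S) (t : unitInterval) (ht : 1 ≤ 2 * (t : ℝ)) :
    hCM x₀ y₀ φ t = wedgeInr x₀ y₀
      ((φ.1 (⟨2 - 2 * (t : ℝ), by linarith [t.2.2], by linarith [t.2.1]⟩ :
        unitInterval)).2) := by
  rw [hCM_apply, hMap]
  by_cases h : 2 * (t : ℝ) ≤ 1
  · have he : 2 * (t : ℝ) = 1 := le_antisymm h ht
    rw [if_pos h, pr_mem (mul_nonneg (by norm_num) t.2.1) h]
    have e1 : wedgeInl x₀ y₀
        ((φ.1 (⟨2 * (t : ℝ), mul_nonneg (by norm_num) t.2.1, h⟩ : unitInterval)).1) =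
        wedgeInl x₀ y₀ ((φ.1 1).1) :=
      congrArg (fun z => wedgeInl x₀ y₀ ((φ.1 z).1)) (Subtype.ext he)
    have e2 : wedgeInr x₀ y₀
        ((φ.1 (⟨2 - 2 * (t : ℝ), by linarith [t.2.2], by linarith [t.2.1]⟩ :
          unitInterval)).2) = wedgeInr x₀ y₀ ((φ.1 1).2) :=
      congrArg (fun z => wedgeInr x₀ y₀ ((φ.1 z).2))
        (Subtype.ext (show (2 : ℝ) - 2 * (t : ℝ) = 1 by linarith))
    rw [e1, e2, φ.2]
    exact wedge_basepoint x₀ y₀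
  · rw [if_neg h]
    have hle : 2 - 2 * (t : ℝ) ≤ 1 := by linarith [le_of_not_ge h]
    rw [pr_mem (by linarith [t.2.2]) hle]

lemma hCM_zero (φ : S) : hCM x₀ y₀ φ 0 = wedgeInl x₀ y₀ ((φ.1 0).1) := by
  rw [hCM_left x₀ y₀ φ 0 (by norm_num)]
  exact congrArg (fun z => wedgeInl x₀ y₀ ((φ.1 z).1)) (Subtype.ext (by norm_num))

lemma hCM_one (φ : S) : hCM x₀ y₀ φ 1 = wedgeInr x₀ y₀ ((φ.1 0).2) := by
  rw [hCM_right x₀ y₀ φ 1 (by norm_num)]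
  exact congrArg (fun z => wedgeInr x₀ y₀ ((φ.1 z).2)) (Subtype.ext (by norm_num))

lemma hFun_mem (φ : S) :
    (∃ x, hCM x₀ y₀ φ 0 = wedgeInl x₀ y₀ x) ∧
      ∃ y, hCM x₀ y₀ φ 1 = wedgeInr x₀ y₀ y :=
  ⟨⟨_, hCM_zero x₀ y₀ φ⟩, ⟨_, hCM_one x₀ y₀ φ⟩⟩

/-- The map `h` into the subtype. -/
def hFun : C(S, Q) :=
  ⟨fun φ => ⟨hCM x₀ y₀ φ, hFun_mem x₀ y₀ φ⟩,
   Continuous.subtype_mk (hCM x₀ y₀).continuous (hFun_mem x₀ y₀)⟩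

/-- The underlying map of `r`, uncurried. -/
def rMap : Q × unitInterval → X × Y := fun p =>
  (wedgeRetrX x₀ y₀ (p.1.1 p.2), wedgeRetrY x₀ y₀ (p.1.1 (σ p.2)))

lemma continuous_rMap : Continuous (rMap x₀ y₀) := by
  apply Continuous.prodMk
  · exact (continuous_wedgeRetrX x₀ y₀).comp <| continuous_eval.comp <|
      (continuous_subtype_val.comp continuous_fst).prodMk continuous_snd
  · exact (continuous_wedgeRetrY x₀ y₀).comp <| continuous_eval.comp <|
      (continuous_subtype_val.comp continuous_fst).prodMk
        (unitInterval.continuous_symm.comp continuous_snd)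

def rCM : C(Q, C(unitInterval, X × Y)) :=
  ContinuousMap.curry ⟨rMap x₀ y₀, continuous_rMap x₀ y₀⟩

lemma rCM_apply (ψ : Q) (t : unitInterval) :
    rCM x₀ y₀ ψ t = (wedgeRetrX x₀ y₀ (ψ.1 t), wedgeRetrY x₀ y₀ (ψ.1 (σ t))) := rfl

lemma rFun_mem (ψ : Q) : rCM x₀ y₀ ψ 1 = (x₀, y₀) := by
  obtain ⟨⟨x, hx⟩, ⟨y, hy⟩⟩ := ψ.2
  rw [rCM_apply, hy, unitInterval.symm_one, hx]
  rfl

/-- The map `r` into the subtype. -/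
def rFun : C(Q, S) :=
  ⟨fun ψ => ⟨rCM x₀ y₀ ψ, rFun_mem x₀ y₀ ψ⟩,
   Continuous.subtype_mk (rCM x₀ y₀).continuous (rFun_mem x₀ y₀)⟩

lemma retrX_inl (x : X) : wedgeRetrX x₀ y₀ (wedgeInl x₀ y₀ x) = x := rfl
lemma retrX_inr (y : Y) : wedgeRetrX x₀ y₀ (wedgeInr x₀ y₀ y) = x₀ := rfl
lemma retrY_inl (x : X) : wedgeRetrY x₀ y₀ (wedgeInl x₀ y₀ x) = y₀ := rfl
lemma retrY_inr (y : Y) : wedgeRetrY x₀ y₀ (wedgeInr x₀ y₀ y) = y := rfl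

/-- Part (c): the composite is reparametrization by `α t = min (2t) 1`. -/
lemma comp_eq (φ : S) (t : unitInterval) :
    (rFun x₀ y₀ (hFun x₀ y₀ φ)).1 t = φ.1 (⟨min (2 * (t : ℝ)) 1,
      le_min (mul_nonneg (by norm_num) t.2.1) zero_le_one, min_le_right _ _⟩ :
      unitInterval) := by
  have key : (rFun x₀ y₀ (hFun x₀ y₀ φ)).1 t =
      (wedgeRetrX x₀ y₀ (hCM x₀ y₀ φ t), wedgeRetrY x₀ y₀ (hCM x₀ y₀ φ (σ t))) := rfl
  rw [key]
  have hσ : ((σ t : unitInterval) : ℝ) = 1 - t := unitInterval.coe_symm_eq t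
  by_cases h : 2 * (t : ℝ) ≤ 1
  · have hσ2 : 1 ≤ 2 * ((σ t : unitInterval) : ℝ) := by rw [hσ]; linarith
    rw [hCM_left x₀ y₀ φ t h, hCM_right x₀ y₀ φ (σ t) hσ2, retrX_inl, retrY_inr]
    have e1 : (φ.1 (⟨2 * (t : ℝ), mul_nonneg (by norm_num) t.2.1, h⟩ : unitInterval)).1 =
        (φ.1 (⟨min (2 * (t : ℝ)) 1, le_min (mul_nonneg (by norm_num) t.2.1) zero_le_one,
          min_le_right _ _⟩ : unitInterval)).1 :=
      congrArg (fun z => (φ.1 z).1) (Subtype.ext (min_eq_left h).symm)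
    have e2 : (φ.1 (⟨2 - 2 * ((σ t : unitInterval) : ℝ), by linarith [(σ t).2.2],
          by linarith [(σ t).2.1]⟩ : unitInterval)).2 =
        (φ.1 (⟨min (2 * (t : ℝ)) 1, le_min (mul_nonneg (by norm_num) t.2.1) zero_le_one,
          min_le_right _ _⟩ : unitInterval)).2 :=
      congrArg (fun z => (φ.1 z).2)
        (Subtype.ext (by
          show (2 : ℝ) - 2 * ((σ t : unitInterval) : ℝ) = min (2 * (t : ℝ)) 1
          rw [hσ, min_eq_left h]; ring))
    rw [e1, e2]
  · have h' : 1 ≤ 2 * (t : ℝ) := le_of_not_ge h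
    have hσ2 : 2 * ((σ t : unitInterval) : ℝ) ≤ 1 := by rw [hσ]; linarith
    rw [hCM_right x₀ y₀ φ t h', hCM_left x₀ y₀ φ (σ t) hσ2, retrX_inr, retrY_inl]
    have harg : (⟨min (2 * (t : ℝ)) 1, le_min (mul_nonneg (by norm_num) t.2.1) zero_le_one,
        min_le_right _ _⟩ : unitInterval) = 1 := Subtype.ext (min_eq_right h')
    rw [harg, φ.2]

/-- The underlying map of the homotopy, uncurried. -/
def gMap : (S × unitInterval) × unitInterval → X × Y := fun p =>
  p.1.1.1 (pr (min ((2 - (p.1.2 : ℝ)) * p.2) 1))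

lemma continuous_gMap : Continuous (gMap x₀ y₀) := by
  have h1 : Continuous fun p : (S × unitInterval) × unitInterval => p.1.1.1 :=
    continuous_subtype_val.comp (continuous_fst.comp continuous_fst)
  have h2 : Continuous fun p : (S × unitInterval) × unitInterval =>
      pr (min ((2 - (p.1.2 : ℝ)) * p.2) 1) :=
    (continuous_pr).comp <| Continuous.min
      ((continuous_const.sub
          (continuous_subtype_val.comp (continuous_snd.comp continuous_fst))).mul
        (continuous_subtype_val.comp continuous_snd)) continuous_const
  exact continuous_eval.comp (h1.prodMk h2)

def gCM : C(S × unitInterval, C(unitInterval, X × Y)) :=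
  ContinuousMap.curry ⟨gMap x₀ y₀, continuous_gMap x₀ y₀⟩

lemma gCM_apply (p : S × unitInterval) (t : unitInterval) :
    gCM x₀ y₀ p t = p.1.1 (pr (min ((2 - (p.2 : ℝ)) * t) 1)) := rfl

lemma gFun_mem (p : S × unitInterval) : gCM x₀ y₀ p 1 = (x₀, y₀) := by
  rw [gCM_apply]
  have h1 : min ((2 - (p.2 : ℝ)) * ((1 : unitInterval) : ℝ)) 1 = 1 := by
    rw [min_eq_right]
    simp only [Set.Icc.coe_one, mul_one]
    linarith [p.2.2.2]
  rw [h1, pr_mem zero_le_one le_rfl]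
  exact p.1.2

def gFun : C(S × unitInterval, S) :=
  ⟨fun p => ⟨gCM x₀ y₀ p, gFun_mem x₀ y₀ p⟩,
   Continuous.subtype_mk (gCM x₀ y₀).continuous (gFun_mem x₀ y₀)⟩

end WedgeAux

theorem wedge_path_retraction (x₀ : X) (y₀ : Y) :
    ∃ (h : C({φ : C(unitInterval, X × Y) // φ 1 = (x₀, y₀)},
            {ψ : C(unitInterval, Wedge x₀ y₀) //
              (∃ x, ψ 0 = wedgeInl x₀ y₀ x) ∧ ∃ y, ψ 1 = wedgeInr x₀ y₀ y}))
      (r : C({ψ : C(unitInterval, Wedge x₀ y₀) //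
              (∃ x, ψ 0 = wedgeInl x₀ y₀ x) ∧ ∃ y, ψ 1 = wedgeInr x₀ y₀ y},
            {φ : C(unitInterval, X × Y) // φ 1 = (x₀, y₀)})),
      -- (a): `h φ` is the concatenation of `jX ∘ φ_X` followed by the reverse of `jY ∘ φ_Y`,
      (∀ φ : {φ : C(unitInterval, X × Y) // φ 1 = (x₀, y₀)}, ∀ t : unitInterval,
        (∀ ht : 2 * (t : ℝ) ≤ 1,
          (h φ).1 t = wedgeInl x₀ y₀
            ((φ.1 (⟨2 * (t : ℝ), mul_nonneg (by norm_num) t.2.1, ht⟩ : unitInterval)).1)) ∧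
        (∀ ht : 1 ≤ 2 * (t : ℝ),
          (h φ).1 t = wedgeInr x₀ y₀
            ((φ.1 (⟨2 - 2 * (t : ℝ), by linarith [t.2.2], by linarith [t.2.1]⟩ :
              unitInterval)).2))) ∧
      -- and `h φ` is a path from `jX (φ_X 0)` to `jY (φ_Y 0)`;
      (∀ φ : {φ : C(unitInterval, X × Y) // φ 1 = (x₀, y₀)},
        (h φ).1 0 = wedgeInl x₀ y₀ ((φ.1 0).1) ∧ (h φ).1 1 = wedgeInr x₀ y₀ ((φ.1 0).2)) ∧
      -- (b): `r ψ = (r_X ∘ ψ, reverse of r_Y ∘ ψ)`;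
      (∀ ψ : {ψ : C(unitInterval, Wedge x₀ y₀) //
              (∃ x, ψ 0 = wedgeInl x₀ y₀ x) ∧ ∃ y, ψ 1 = wedgeInr x₀ y₀ y},
        ∀ t : unitInterval,
        (r ψ).1 t = (wedgeRetrX x₀ y₀ (ψ.1 t), wedgeRetrY x₀ y₀ (ψ.1 (σ t)))) ∧
      -- (c): `(r ∘ h) φ = φ ∘ α` with `α t = min (2t) 1`,
      (∀ φ : {φ : C(unitInterval, X × Y) // φ 1 = (x₀, y₀)}, ∀ t : unitInterval,
        (r (h φ)).1 t = φ.1 (⟨min (2 * (t : ℝ)) 1,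
          le_min (mul_nonneg (by norm_num) t.2.1) zero_le_one, min_le_right _ _⟩ :
          unitInterval)) ∧
      -- in particular `r ∘ h` is homotopic to the identity through maps preserving
      -- the initial point of each path.
      (∃ G : C({φ : C(unitInterval, X × Y) // φ 1 = (x₀, y₀)} × unitInterval,
              {φ : C(unitInterval, X × Y) // φ 1 = (x₀, y₀)}),
        (∀ φ, G (φ, 0) = r (h φ)) ∧ (∀ φ, G (φ, 1) = φ) ∧
        (∀ φ s, (G (φ, s)).1 0 = φ.1 0)) := by
  classical
  refine ⟨WedgeAux.hFun x₀ y₀, WedgeAux.rFun x₀ y₀, ?_, ?_, ?_, ?_, ?_⟩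
  · intro φ t
    exact ⟨fun ht => WedgeAux.hCM_left x₀ y₀ φ t ht,
           fun ht => WedgeAux.hCM_right x₀ y₀ φ t ht⟩
  · intro φ
    constructor
    · have := WedgeAux.hCM_left x₀ y₀ φ 0 (by norm_num)
      simp at this; exact this
    · have := WedgeAux.hCM_right x₀ y₀ φ 1 (by norm_num)
      simp at this; exact this
  · intro ψ t
    exact WedgeAux.rCM_apply x₀ y₀ ψ t
  · intro φ t
    exact WedgeAux.comp_eq x₀ y₀ φ t
  · refine ⟨WedgeAux.gFun x₀ y₀, ?_, ?_, ?_⟩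
    · intro φ
      refine Subtype.ext (ContinuousMap.ext fun t => ?_)
      have h1 : (WedgeAux.gFun x₀ y₀ (φ, 0)).1 t =
          φ.1 (WedgeAux.pr (min ((2 - ((0 : unitInterval) : ℝ)) * t) 1)) := rfl
      rw [h1, WedgeAux.comp_eq x₀ y₀ φ t]
      have h2 : min ((2 - ((0 : unitInterval) : ℝ)) * (t : ℝ)) 1 = min (2 * (t : ℝ)) 1 := by
        simp only [Set.Icc.coe_zero, sub_zero]
      have h0 : (0 : ℝ) ≤ min ((2 - ((0 : unitInterval) : ℝ)) * (t : ℝ)) 1 := by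
        simp only [Set.Icc.coe_zero, sub_zero]
        exact le_min (mul_nonneg (by norm_num) t.2.1) zero_le_one
      rw [WedgeAux.pr_mem h0 (min_le_right _ _)]
      exact congrArg φ.1 (Subtype.ext h2)
    · intro φ
      refine Subtype.ext (ContinuousMap.ext fun t => ?_)
      have h1 : (WedgeAux.gFun x₀ y₀ (φ, 1)).1 t =
          φ.1 (WedgeAux.pr (min ((2 - ((1 : unitInterval) : ℝ)) * t) 1)) := rfl
      rw [h1]
      have h2 : min ((2 - ((1 : unitInterval) : ℝ)) * t) 1 = (t : ℝ) := by
        simp only [Set.Icc.coe_one]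
        rw [min_eq_left (by linarith [t.2.2])]
        ring
      rw [h2, WedgeAux.pr_mem t.2.1 t.2.2]
    · intro φ s
      have h1 : (WedgeAux.gFun x₀ y₀ (φ, s)).1 0 =
          φ.1 (WedgeAux.pr (min ((2 - (s : ℝ)) * (0 : unitInterval)) 1)) := rfl
      rw [h1]
      have h2 : min ((2 - (s : ℝ)) * ((0 : unitInterval) : ℝ)) 1 = 0 := by
        simp
      rw [h2, WedgeAux.pr_mem le_rfl zero_le_one]
      rfl

end
end

section
/- Let p : E → X be a covering map between topological spaces such that every fiber p⁻¹(x) is finite with exactly N ≥ 1 elements, and equip E with its Borel σ-algebra. Then the map X → ProbabilityMeasure(E) sending x to the uniform probability measure (1/N)·Σ_{e ∈ p⁻¹(x)} δ_e (the evenly distributed measure on the fiber over x) is continuous with respect to the topology of weak convergence of probability measures. -/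
open MeasureTheory

open Filter Topology Set
open scoped ENNReal

/-- For a covering map `p : E → X` with all fibers of exactly `N ≥ 1` points, the map sending
`x` to the evenly distributed probability measure `(1/N) • ∑_{e ∈ p⁻¹(x)} δ_e` on the fiber
over `x` is continuous in the topology of weak convergence. -/
theorem continuous_uniform_measure_on_fibers {E X : Type*} [TopologicalSpace E]
    [TopologicalSpace X] [MeasurableSpace E] [BorelSpace E]
    (p : E → X) (hp : IsCoveringMap p) (N : ℕ) (hN : 1 ≤ N)
    (hfin : ∀ x : X, (p ⁻¹' {x}).Finite) (hcard : ∀ x : X, Nat.card (p ⁻¹' {x}) = N) :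
    ∃ f : X → ProbabilityMeasure E,
      (∀ x : X, (f x : Measure E) =
        (N : ENNReal)⁻¹ • Measure.sum (fun e : (p ⁻¹' {x}) => Measure.dirac (e : E))) ∧
      Continuous f := by
  classical
  have hN0 : (N : ℝ≥0∞) ≠ 0 := Nat.cast_ne_zero.2 (by omega)
  set μ : X → Measure E := fun x =>
    (N : ℝ≥0∞)⁻¹ • Measure.sum (fun e : (p ⁻¹' {x}) => Measure.dirac (e : E)) with hμ
  have hcard' : ∀ x : X, (hfin x).toFinset.card = N := by
    intro x
    rw [← hcard x, Nat.card_eq_card_finite_toFinset (hfin x)]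
  have hsum : ∀ x : X, Measure.sum (fun e : (p ⁻¹' {x}) => Measure.dirac (e : E)) =
      ∑ e ∈ (hfin x).toFinset.attach, Measure.dirac (e : E) := by
    intro x
    letI : Fintype (p ⁻¹' {x}) := (hfin x).fintype
    rw [Measure.sum_fintype]
    apply Finset.sum_nbij' (fun e => ⟨(e : E), by simpa using e.2⟩)
      (fun e => ⟨(e : E), by have := e.2; simpa using (hfin x).mem_toFinset.1 this⟩) <;>
      simp
  have hprob : ∀ x, IsProbabilityMeasure (μ x) := by
    intro x
    constructor
    rw [hμ]
    simp only [Measure.smul_apply, hsum x, Measure.coe_finset_sum, Finset.sum_apply,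
      Measure.dirac_apply_of_mem (mem_univ _), Finset.sum_const, Finset.card_attach,
      smul_eq_mul, nsmul_eq_mul, mul_one, hcard' x]
    exact ENNReal.inv_mul_cancel hN0 (ENNReal.natCast_ne_top N)
  set f : X → ProbabilityMeasure E := fun x => ⟨μ x, hprob x⟩ with hf
  refine ⟨f, fun x => rfl, ?_⟩
  rw [continuous_iff_continuousAt]
  intro x₀
  rw [ContinuousAt, ProbabilityMeasure.tendsto_iff_forall_integral_tendsto]
  intro g
  have hint : ∀ x : X, ∫ e, g e ∂((f x : Measure E)) =
      ((N : ℝ≥0∞)⁻¹).toReal • ∑ e ∈ (hfin x).toFinset, g e := by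
    intro x
    show ∫ e, g e ∂(μ x) = _
    rw [hμ]
    simp only [integral_smul_measure, hsum x]
    congr 1
    rw [integral_finset_sum_measure (fun i _ => g.integrable _)]
    rw [← Finset.sum_attach ((hfin x).toFinset) (fun e => g e)]
    exact Finset.sum_congr rfl fun e _ =>
      integral_dirac' _ _ g.continuous.stronglyMeasurable
  simp only [hint]
  apply Tendsto.const_smul
  -- continuity of `x ↦ ∑ e ∈ fiber x, g e` at `x₀`, via a trivialization of the covering
  have hne : Nonempty (p ⁻¹' {x₀}) := (Nat.card_pos_iff.1 (by rw [hcard x₀]; omega)).1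
  obtain ⟨T, hxT⟩ : ∃ T : Bundle.Trivialization (p ⁻¹' {x₀}) p, x₀ ∈ T.baseSet :=
    ⟨_, (hp x₀).mem_toTrivialization_baseSet⟩
  have key : ∀ y ∈ T.baseSet, ∑ e ∈ (hfin y).toFinset, g e =
      ∑ i ∈ (hfin x₀).toFinset.attach, g (T.toOpenPartialHomeomorph.symm (y, ⟨i, by
        have := i.2; simpa using (hfin x₀).mem_toFinset.1 this⟩)) := by
    intro y hy
    have hyy : ∀ e ∈ (hfin y).toFinset, p e = y := fun e he => by
      simpa using (hfin y).mem_toFinset.1 he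
    have hmem : ∀ e ∈ (hfin y).toFinset, ((T e).2 : E) ∈ (hfin x₀).toFinset :=
      fun e he => (hfin x₀).mem_toFinset.2 (T e).2.2
    refine Finset.sum_bij'
      (i := fun e he => (⟨((T e).2 : E), hmem e he⟩ : {z // z ∈ (hfin x₀).toFinset}))
      (j := fun a _ => T.toOpenPartialHomeomorph.symm (y, ⟨(a : E), by
        simpa using (hfin x₀).mem_toFinset.1 a.2⟩))
      (fun e he => Finset.mem_attach _ _)
      (fun a ha => (hfin y).mem_toFinset.2 (by
        simp only [mem_preimage, mem_singleton_iff]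
        exact T.proj_symm_apply' hy))
      ?_ ?_ ?_
    · intro e he
      have hsrc : e ∈ T.source := T.mem_source.2 (by rw [hyy e he]; exact hy)
      show T.toOpenPartialHomeomorph.symm (y, (T e).2) = e
      rw [← hyy e he]
      exact T.symm_apply_mk_proj hsrc
    · intro a ha
      apply Subtype.ext
      have := T.apply_symm_apply' (x := (⟨(a : E), by
        simpa using (hfin x₀).mem_toFinset.1 a.2⟩ : ↥(p ⁻¹' {x₀}))) hy
      simpa using congrArg (fun q => ((q.2 : ↥(p ⁻¹' {x₀})) : E)) this
    · intro e he
      have hsrc : e ∈ T.source := T.mem_source.2 (by rw [hyy e he]; exact hy)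
      show g e = g (T.toOpenPartialHomeomorph.symm (y, (T e).2))
      congr 1
      rw [← hyy e he]
      exact (T.symm_apply_mk_proj hsrc).symm
  have hcont : ContinuousOn (fun y =>
      ∑ i ∈ (hfin x₀).toFinset.attach, g (T.toOpenPartialHomeomorph.symm (y, ⟨i, by
        have := i.2; simpa using (hfin x₀).mem_toFinset.1 this⟩))) T.baseSet := by
    apply continuousOn_finset_sum
    intro i _
    apply g.continuous.comp_continuousOn
    apply T.toOpenPartialHomeomorph.continuousOn_symm.comp
    · exact (continuous_id.prodMk continuous_const).continuousOn
    · intro y hy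
      rw [T.target_eq]
      exact ⟨hy, mem_univ _⟩
  exact (hcont.continuousAt (T.open_baseSet.mem_nhds hxT)).congr
    (by filter_upwards [T.open_baseSet.mem_nhds hxT] with y hy using (key y hy).symm)
end
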